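/- There exist a homeomorphism f : 𝕋² → 𝕋² homotopic to the identity, a lift f̃ : ℝ² → ℝ², a point p ∈ 𝕋², and a vector v ∈ ℝ² of irrational slope, such that Fix(f) = {p}, the set of fixed points of f̃ is exactly π⁻¹(p), and the rotation set ρ(f̃) is the non-degenerate segment {t·v : 0 ≤ t ≤ s} for some s > 0; in particular ρ(f̃) is a non-degenerate interval of irrational slope having (0,0) as an endpoint. -/

import Mathlib

open Filter Topology Set Function

noncomputable section

/-- The torus 𝕋² = ℝ²/ℤ². -/
abbrev T2 : Type := AddCircle (1 : ℝ) × AddCircle (1 : ℝ)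

/-- The canonical projection π : ℝ² → 𝕋². -/
def proj : ℝ × ℝ → T2 := fun p => ((p.1 : AddCircle (1 : ℝ)), (p.2 : AddCircle (1 : ℝ)))

/-- `F` is a lift of `f`: it projects to `f` and commutes with integer translations. -/
def IsLift (f : T2 → T2) (F : ℝ × ℝ → ℝ × ℝ) : Prop :=
  (∀ x, proj (F x) = f (proj x)) ∧
    ∀ (x : ℝ × ℝ) (v : ℤ × ℤ),
      F (x + ((v.1 : ℝ), (v.2 : ℝ))) = F x + ((v.1 : ℝ), (v.2 : ℝ))

/-- The Misiurewicz–Ziemian rotation set of a lift `F`. -/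
def rotSet (F : ℝ × ℝ → ℝ × ℝ) : Set (ℝ × ℝ) :=
  ⋂ m ∈ Set.Ici (1 : ℕ),
    closure (⋃ n ∈ Set.Ici m, {y : ℝ × ℝ | ∃ x : ℝ × ℝ, y = ((n : ℝ))⁻¹ • (F^[n] x - x)})

/-
The torus map is `z ↦ z + (‖z‖ / 8) • (1, φ)` with `φ` the golden ratio, lifted to
`F x = x + (‖π x‖ / 8) • (1, φ)`. Since `‖(1, φ)‖ = φ < 2`, `F - id` is `1/4`-Lipschitz, so `F` is
a homeomorphism; the speed `‖π x‖ / 8` vanishes exactly on `ℤ²`, which gives the fixed points.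
Every displacement `Fⁿ x - x` is a nonnegative multiple of `(1, φ)`, and the possible multiples at
time `n` form an interval `[0, Mₙ]`; hence the rotation set is `[0, limsup Mₙ / n] • (1, φ)`.

It remains to see that some orbit moves linearly. Along the line `t ↦ (t, φ t + 1/2)` the map is
`t ↦ t + σ t`, and since `σ` is `1/4`-Lipschitz each step uses up at least `4/5` of `∫ dt / σ`.
Near an integer `k` the speed is at least `√(|t - k| · ‖φ k + 1/2‖) / 24`, so the window around
`k` contributes `O(‖φ k + 1/2‖^{-1/2})`. Since `φ` is badly approximable, the points `φ k + 1/2`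
(`k ≤ N`) are `1/(4(N+1))`-separated on the circle, and the sum of these contributions is `O(N)`.
Hence `∫₀ᴺ dt / σ = O(N)` and the orbit of `(0, 1/2)` advances linearly.
-/

open Real goldenRatio MeasureTheory intervalIntegral
open scoped NNReal

theorem Real.one_div_four_mul_le_abs_mul_goldenRatio_sub {q : ℕ} (hq : 0 < q) (p : ℤ) :
    1 / (4 * q) ≤ |q * φ - p| := by
  have hq' : (1 : ℝ) ≤ q := by exact_mod_cast hq
  have hrat : ∀ x : ℝ, Irrational x → p - q * x ≠ 0 := fun x hx h =>
    hx.ne_rat (p / q) <| by push_cast; rw [eq_div_iff (by positivity)]; linarith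
  -- The product of the two conjugate errors is the nonzero integer `p² - pq - q²`.
  have hnorm : (p - q * φ) * (p - q * ψ) = ((p ^ 2 - p * q - q ^ 2 : ℤ) : ℝ) := by
    push_cast
    linear_combination (-(p : ℝ) * q) * goldenRatio_add_goldenConj +
      (q : ℝ) ^ 2 * goldenRatio_mul_goldenConj
  have hprod : (1 : ℝ) ≤ |p - q * φ| * |p - q * ψ| := by
    rw [← abs_mul, hnorm, ← Int.cast_abs]
    have hne : p ^ 2 - p * q - q ^ 2 ≠ 0 := fun h0 => by
      rw [h0, Int.cast_zero, mul_eq_zero] at hnorm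
      exact hnorm.elim (hrat φ goldenRatio_irrational) (hrat ψ goldenConj_irrational)
    exact_mod_cast Int.one_le_abs hne
  rw [abs_sub_comm]
  rcases le_or_gt 1 |p - q * φ| with h | h
  · calc 1 / (4 * (q : ℝ)) ≤ 1 := by rw [div_le_one (by positivity)]; linarith
      _ ≤ _ := h
  · have hconj : |p - q * ψ| ≤ 4 * q := by
      have h5 : √5 < 3 := by rw [sqrt_lt' (by norm_num)]; norm_num
      calc |p - q * ψ| = |(p - q * φ) + q * √5| := by
            rw [← goldenRatio_sub_goldenConj]; congr 1; ring
        _ ≤ |p - q * φ| + q * √5 := by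
            refine (abs_add_le _ _).trans_eq ?_
            rw [abs_of_nonneg (by positivity : (0 : ℝ) ≤ q * √5)]
        _ ≤ 4 * q := by nlinarith
    rw [div_le_iff₀ (by positivity)]
    nlinarith [abs_nonneg (p - q * φ)]

theorem Real.one_div_four_mul_le_norm_mul_goldenRatio {q : ℕ} (hq : 0 < q) :
    1 / (4 * q) ≤ ‖((q * φ : ℝ) : UnitAddCircle)‖ := by
  rw [UnitAddCircle.norm_eq]
  exact one_div_four_mul_le_abs_mul_goldenRatio_sub hq _

theorem sum_range_inv_sqrt_succ_le (N : ℕ) :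
    ∑ j ∈ Finset.range N, (√((j : ℝ) + 1))⁻¹ ≤ 2 * √N := by
  induction N with
  | zero => simp
  | succ N ih =>
    rw [Finset.sum_range_succ, Nat.cast_succ]
    have hN : 0 < √((N : ℝ) + 1) := by positivity
    have hstep : (√((N : ℝ) + 1))⁻¹ ≤ 2 * √((N : ℝ) + 1) - 2 * √N := by
      rw [inv_le_iff_one_le_mul₀ hN]
      nlinarith [sq_nonneg (√((N : ℝ) + 1) - √N), Real.sq_sqrt (by positivity : (0 : ℝ) ≤ N + 1),
        Real.sq_sqrt (Nat.cast_nonneg (α := ℝ) N)]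
    linarith

theorem sum_range_inv_sqrt_max_le {ε δ : ℝ} (hε : 0 < ε) (hδ : 0 < δ) (N : ℕ) :
    ∑ j ∈ Finset.range (N + 1), (√(max ε (j * δ)))⁻¹ ≤ (√ε)⁻¹ + 2 * √N / √δ := by
  have htail : ∑ j ∈ Finset.range N, (√(max ε ((j + 1 : ℕ) * δ)))⁻¹ ≤
      (√δ)⁻¹ * ∑ j ∈ Finset.range N, (√((j : ℝ) + 1))⁻¹ := by
    rw [Finset.mul_sum]
    refine Finset.sum_le_sum fun j _ => ?_
    rw [← mul_inv, ← Real.sqrt_mul hδ.le, mul_comm δ]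
    exact inv_anti₀ (by positivity) (Real.sqrt_le_sqrt (by push_cast; exact le_max_right _ _))
  rw [Finset.sum_range_succ', add_comm, Nat.cast_zero, zero_mul, max_eq_left hε.le]
  gcongr
  calc _ ≤ _ := htail
    _ ≤ (√δ)⁻¹ * (2 * √N) := by gcongr; exact sum_range_inv_sqrt_succ_le N
    _ = 2 * √N / √δ := by ring

theorem sum_inv_sqrt_le_of_separated {ι : Type*} {s : Finset ι} {x : ι → ℝ} {ε δ L : ℝ}
    (hε : 0 < ε) (hδ : 0 < δ) (hx : ∀ i ∈ s, ε ≤ x i ∧ x i ≤ L)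
    (hsep : ∀ i ∈ s, ∀ j ∈ s, i ≠ j → δ ≤ |x i - x j|) :
    ∑ i ∈ s, (√(x i))⁻¹ ≤ (√ε)⁻¹ + 2 * √L / δ := by
  classical
  obtain rfl | ⟨i₀, hi₀⟩ := s.eq_empty_or_nonempty
  · simp only [Finset.sum_empty]; positivity
  have hpos : ∀ i ∈ s, 0 ≤ x i / δ := fun i hi => div_nonneg (hε.le.trans (hx i hi).1) hδ.le
  -- Bucket the points into intervals of length `δ`: each bucket holds at most one point.
  set bucket : ι → ℕ := fun i => ⌊x i / δ⌋₊
  have hinj : Set.InjOn bucket s := by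
    intro i hi j hj hij
    by_contra hne
    have hfl : ⌊x i / δ⌋ = ⌊x j / δ⌋ := by
      rw [← Int.natCast_floor_eq_floor (hpos i hi), ← Int.natCast_floor_eq_floor (hpos j hj)]
      exact congrArg _ hij
    have h1 := Int.abs_sub_lt_one_of_floor_eq_floor hfl
    rw [← sub_div, abs_div, abs_of_pos hδ, div_lt_one hδ] at h1
    exact (hsep i hi j hj hne).not_gt h1
  have hterm : ∀ i ∈ s, (√(x i))⁻¹ ≤ (√(max ε (bucket i * δ)))⁻¹ := fun i hi => by
    have hfloor : (bucket i : ℝ) * δ ≤ x i := (le_div_iff₀ hδ).1 (Nat.floor_le (hpos i hi))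
    exact inv_anti₀ (by positivity) (Real.sqrt_le_sqrt (max_le (hx i hi).1 hfloor))
  set N := ⌊L / δ⌋₊
  have himage : s.image bucket ⊆ Finset.range (N + 1) := by
    simp only [Finset.image_subset_iff, Finset.mem_range, Nat.lt_succ_iff]
    exact fun i hi => Nat.floor_mono (div_le_div_of_nonneg_right (hx i hi).2 hδ.le)
  have hN : √N ≤ √L / √δ := by
    rw [← Real.sqrt_div' _ hδ.le]
    exact Real.sqrt_le_sqrt (Nat.floor_le ((hpos i₀ hi₀).trans
      (div_le_div_of_nonneg_right (hx i₀ hi₀).2 hδ.le)))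
  calc ∑ i ∈ s, (√(x i))⁻¹ ≤ ∑ i ∈ s, (√(max ε (bucket i * δ)))⁻¹ := Finset.sum_le_sum hterm
    _ = ∑ j ∈ s.image bucket, (√(max ε (j * δ)))⁻¹ :=
      (Finset.sum_image (f := fun j : ℕ => (√(max ε (j * δ)))⁻¹) hinj).symm
    _ ≤ ∑ j ∈ Finset.range (N + 1), (√(max ε (j * δ)))⁻¹ :=
      Finset.sum_le_sum_of_subset_of_nonneg himage fun j _ _ => by positivity
    _ ≤ (√ε)⁻¹ + 2 * (√L / √δ) / √δ := by
      grw [sum_range_inv_sqrt_max_le hε hδ N, hN]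
    _ = (√ε)⁻¹ + 2 * √L / (√δ * √δ) := by ring
    _ = (√ε)⁻¹ + 2 * √L / δ := by rw [Real.mul_self_sqrt hδ.le]

theorem UnitAddCircle.exists_coe_eq_abs_eq_norm (z : UnitAddCircle) :
    ∃ y : ℝ, (y : UnitAddCircle) = z ∧ |y| = ‖z‖ := by
  obtain ⟨y, rfl⟩ := QuotientAddGroup.mk_surjective z
  exact ⟨y - round y, by simp, UnitAddCircle.norm_eq.symm⟩

theorem UnitAddCircle.sum_inv_sqrt_norm_le_of_separated {ι : Type*} {s : Finset ι}
    {z : ι → UnitAddCircle} {ε δ : ℝ} (hε : 0 < ε) (hδ : 0 < δ) (hz : ∀ i ∈ s, ε ≤ ‖z i‖)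
    (hsep : ∀ i ∈ s, ∀ j ∈ s, i ≠ j → δ ≤ ‖z i - z j‖) :
    ∑ i ∈ s, (√‖z i‖)⁻¹ ≤ 2 * ((√ε)⁻¹ + 2 / δ) := by
  classical
  choose y hyz hy using fun i => exists_coe_eq_abs_eq_norm (z i)
  have hsep' : ∀ i ∈ s, ∀ j ∈ s, i ≠ j → δ ≤ |y i - y j| := fun i hi j hj hij =>
    (hsep i hi j hj hij).trans <| by
      rw [← hyz, ← hyz, ← AddCircle.coe_sub]; exact QuotientAddGroup.norm_mk_le_norm
  have hhalf : ∀ i, |y i| ≤ 1 / 2 := fun i => by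
    simpa [hy] using AddCircle.norm_le_half_period (1 : ℝ) one_ne_zero (x := z i)
  -- Points on each side of `0` are separated reals in `[ε, 1/2]` after taking absolute values.
  have hside : ∀ t : Finset ι, t ⊆ s → (∀ i ∈ t, ∀ j ∈ t, |y i - y j| = abs (|y i| - |y j|)) →
      ∑ i ∈ t, (√‖z i‖)⁻¹ ≤ (√ε)⁻¹ + 2 / δ := fun t hts habs => by
    simp_rw [← hy]
    refine (sum_inv_sqrt_le_of_separated hε hδ (L := 1 / 2)
      (fun i hi => ⟨hy i ▸ hz i (hts hi), hhalf i⟩)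
      fun i hi j hj hij => habs i hi j hj ▸ hsep' i (hts hi) j (hts hj) hij).trans ?_
    gcongr
    nlinarith [Real.sqrt_le_one.mpr (by norm_num : (1 / 2 : ℝ) ≤ 1)]
  rw [← Finset.sum_filter_add_sum_filter_not s (fun i => 0 ≤ y i), two_mul]
  gcongr
  · refine hside _ (Finset.filter_subset _ _) fun i hi j hj => ?_
    simp only [Finset.mem_filter] at hi hj
    rw [abs_of_nonneg hi.2, abs_of_nonneg hj.2]
  · refine hside _ (Finset.filter_subset _ _) fun i hi j hj => ?_
    simp only [Finset.mem_filter, not_le] at hi hj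
    rw [abs_of_neg hi.2, abs_of_neg hj.2, ← abs_neg]; ring_nf

theorem integral_le_of_le_div_sqrt_sub {f : ℝ → ℝ} {a h C : ℝ} (hh : 0 ≤ h)
    (hf : IntervalIntegrable f volume a (a + h)) (hle : ∀ t ∈ Ioo a (a + h), f t ≤ C / √(t - a)) :
    ∫ t in a..a + h, f t ≤ 2 * C * √h := by
  have hrpow : ∀ u : ℝ, 0 ≤ u → C / √u = C * u ^ (-(1 / 2) : ℝ) := fun u hu => by
    rw [Real.sqrt_eq_rpow, Real.rpow_neg hu, div_eq_mul_inv]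
  have hg : IntervalIntegrable (fun t => C * (t - a) ^ (-(1 / 2) : ℝ)) volume a (a + h) := by
    simpa [add_comm] using
      ((intervalIntegrable_rpow' (a := 0) (b := h) (by norm_num)).comp_sub_right a).const_mul C
  calc ∫ t in a..a + h, f t ≤ ∫ t in a..a + h, C * (t - a) ^ (-(1 / 2) : ℝ) :=
        integral_mono_on_of_le_Ioo (by linarith) hf hg fun t ht =>
          (hle t ht).trans_eq (hrpow _ (sub_nonneg.2 ht.1.le))
    _ = C * ∫ u in (0 : ℝ)..h, u ^ (-(1 / 2) : ℝ) := by
      rw [intervalIntegral.integral_const_mul,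
        integral_comp_sub_right (fun u => u ^ (-(1 / 2) : ℝ)), sub_self, add_sub_cancel_left]
    _ = 2 * C * √h := by
      rw [integral_rpow (Or.inl (by norm_num)), Real.sqrt_eq_rpow]; norm_num; ring

theorem integral_le_of_le_div_sqrt_abs_sub {f : ℝ → ℝ} {a h C : ℝ} (hh : 0 ≤ h) (hf : Continuous f)
    (hle : ∀ t, t ≠ a → |t - a| ≤ h → f t ≤ C / √|t - a|) :
    ∫ t in a - h..a + h, f t ≤ 4 * C * √h := by
  have hright : ∫ t in a..a + h, f t ≤ 2 * C * √h :=
    integral_le_of_le_div_sqrt_sub hh (hf.intervalIntegrable _ _) fun t ⟨h₁, h₂⟩ => by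
      have e : |t - a| = t - a := abs_of_pos (sub_pos.2 h₁)
      simpa [e] using hle t h₁.ne' (by linarith)
  have hleft : ∫ t in a..a + h, f (2 * a - t) ≤ 2 * C * √h :=
    integral_le_of_le_div_sqrt_sub hh ((hf.comp (continuous_sub_left _)).intervalIntegrable _ _)
      fun t ⟨h₁, h₂⟩ => by
        have e : |2 * a - t - a| = t - a := by rw [abs_of_neg (by linarith)]; ring
        simpa [e] using hle (2 * a - t) (by linarith) (by linarith)
  rw [integral_comp_sub_left (fun t => f t) (2 * a), show 2 * a - (a + h) = a - h by ring,
    show 2 * a - a = a by ring] at hleft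
  rw [← integral_add_adjacent_intervals (hf.intervalIntegrable _ _) (hf.intervalIntegrable _ _)]
  linarith

theorem sqrt_mul_le_three_mul_max {d x ρ : ℝ} (hd : 0 ≤ d) (hx : ρ - 2 * d ≤ x) :
    √(d * ρ) ≤ 3 * max d x := by
  have h₁ := le_max_left d x
  have h₂ := le_max_right d x
  rw [Real.sqrt_le_left (by linarith)]
  nlinarith

theorem inv_one_add_le_integral_inv {σ : ℝ → ℝ} {L : ℝ≥0} (hσ : LipschitzWith L σ)
    (hpos : ∀ t, 0 < σ t) (t : ℝ) : 1 / (1 + L) ≤ ∫ u in t..t + σ t, (σ u)⁻¹ := by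
  have hσt := hpos t
  -- On a step of length `σ t`, the speed grows by at most the factor `1 + L`.
  have hbound : ∀ u ∈ Icc t (t + σ t), ((1 + L) * σ t)⁻¹ ≤ (σ u)⁻¹ := fun u ⟨h₁, h₂⟩ => by
    refine inv_anti₀ (hpos u) ?_
    have := (abs_le.1 ((Real.dist_eq _ _).symm.trans_le (hσ.dist_le_mul u t))).2
    rw [Real.dist_eq, abs_of_nonneg (by linarith)] at this
    nlinarith [L.coe_nonneg]
  calc 1 / (1 + L) = ∫ _ in t..t + σ t, ((1 + L) * σ t)⁻¹ := by
        rw [intervalIntegral.integral_const, smul_eq_mul]; field_simp; ring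
    _ ≤ _ := intervalIntegral.integral_mono_on (by linarith) intervalIntegrable_const
        ((hσ.continuous.inv₀ fun u => (hpos u).ne').intervalIntegrable _ _) hbound

theorem le_integral_inv_iterate {σ : ℝ → ℝ} {L : ℝ≥0} (hσ : LipschitzWith L σ)
    (hpos : ∀ t, 0 < σ t) (a : ℝ) (n : ℕ) :
    n ≤ (1 + L) * ∫ t in a..(fun t => t + σ t)^[n] a, (σ t)⁻¹ := by
  have hint : ∀ b c, IntervalIntegrable (fun t => (σ t)⁻¹) volume b c := fun _ _ =>
    (hσ.continuous.inv₀ fun u => (hpos u).ne').intervalIntegrable _ _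
  induction n with
  | zero => simp
  | succ n ih =>
    rw [iterate_succ_apply', ← integral_add_adjacent_intervals (hint _ _) (hint _ _), mul_add,
      Nat.cast_succ]
    have := inv_one_add_le_integral_inv hσ hpos ((fun t => t + σ t)^[n] a)
    rw [div_le_iff₀' (by positivity)] at this
    exact add_le_add ih this

theorem le_mul_iterate_add_two_of_integral_inv_le {σ : ℝ → ℝ} {L : ℝ≥0} (hσ : LipschitzWith L σ)
    (hpos : ∀ t, 0 < σ t) {C : ℝ} (hC : ∀ N : ℕ, ∫ t in 0..N, (σ t)⁻¹ ≤ C * (N + 1)) (n : ℕ) :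
    n ≤ (1 + L) * C * ((fun t => t + σ t)^[n] 0 + 2) := by
  set T := (fun t => t + σ t)^[n] 0
  have hT : 0 ≤ T := by
    induction n with
    | zero => simp [T]
    | succ m ih =>
      simp only [T, iterate_succ_apply'] at ih ⊢
      linarith [hpos ((fun t => t + σ t)^[m] 0)]
  have hC0 : 0 ≤ C := by simpa using hC 0
  have hmono : ∫ t in 0..T, (σ t)⁻¹ ≤ ∫ t in (0 : ℝ)..⌈T⌉₊, (σ t)⁻¹ :=
    intervalIntegral.integral_mono_interval le_rfl hT (Nat.le_ceil T)
      (Filter.Eventually.of_forall fun t => (inv_pos.2 (hpos t)).le)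
      ((hσ.continuous.inv₀ fun u => (hpos u).ne').intervalIntegrable _ _)
  have hceil : (⌈T⌉₊ : ℝ) + 1 ≤ T + 2 := by linarith [Nat.ceil_lt_add_one hT]
  calc (n : ℝ) ≤ (1 + L) * ∫ t in 0..T, (σ t)⁻¹ := le_integral_inv_iterate hσ hpos 0 n
    _ ≤ (1 + L) * (C * (T + 2)) := by
      gcongr
      exact hmono.trans ((hC _).trans (by gcongr))
    _ = _ := by ring

theorem biInter_closure_biUnion_Icc_eq_Icc_limsup {a : ℕ → ℝ} {B : ℝ} (h0 : ∀ n, 0 ≤ a n)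
    (hB : ∀ n, a n ≤ B) :
    ⋂ m ∈ Ici 1, closure (⋃ n ∈ Ici m, Icc 0 (a n)) = Icc 0 (limsup a atTop) := by
  have hbdd : IsBoundedUnder (· ≤ ·) atTop a := isBoundedUnder_of ⟨B, hB⟩
  have hcobdd : IsCoboundedUnder (· ≤ ·) atTop a :=
    (isBoundedUnder_of ⟨0, h0⟩).isCoboundedUnder_le
  ext t
  simp only [mem_iInter, mem_Ici]
  constructor
  · intro ht
    refine ⟨closure_minimal (iUnion₂_subset fun n _ => Icc_subset_Ici_self) isClosed_Ici
      (ht 1 le_rfl), le_limsup_of_le hbdd fun b hb => ?_⟩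
    obtain ⟨m, hm⟩ := eventually_atTop.1 hb
    refine closure_minimal (iUnion₂_subset fun n hn => Icc_subset_Iic_self.trans
      (Iic_subset_Iic.2 (hm n (le_of_max_le_left hn)))) isClosed_Iic
      (ht (max m 1) (le_max_right _ _))
  · rintro ⟨ht0, htL⟩ m -
    have hIco : Ico 0 (limsup a atTop) ⊆ ⋃ n ∈ Ici m, Icc 0 (a n) := fun s ⟨hs0, hsL⟩ => by
      obtain ⟨n, hn, hsn⟩ := frequently_atTop.1 (frequently_lt_of_lt_limsup hcobdd hsL) m
      exact mem_biUnion hn ⟨hs0, hsn.le⟩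
    rcases htL.lt_or_eq with htL | rfl
    · exact subset_closure (hIco ⟨ht0, htL⟩)
    rcases ht0.lt_or_eq with hpos | h
    · exact closure_mono hIco (by rw [closure_Ico hpos.ne]; exact ⟨ht0, le_rfl⟩)
    · exact subset_closure (mem_biUnion (le_refl m) ⟨le_of_eq h, h ▸ h0 m⟩)

theorem biInter_closure_biUnion_smul_Icc_eq {E : Type*} [NormedAddCommGroup E] [NormedSpace ℝ E]
    {v : E} (hv : v ≠ 0) {a : ℕ → ℝ} {B : ℝ} (h0 : ∀ n, 0 ≤ a n) (hB : ∀ n, a n ≤ B) :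
    ⋂ m ∈ Ici 1, closure (⋃ n ∈ Ici m, (· • v) '' Icc 0 (a n)) =
      (· • v) '' Icc 0 (limsup a atTop) := by
  have he := isClosedEmbedding_smul_left (𝕜 := ℝ) hv
  rw [← biInter_closure_biUnion_Icc_eq_Icc_limsup h0 hB,
    InjOn.image_biInter_eq (p := (· ∈ Ici 1)) ⟨1, self_mem_Ici⟩ he.injective.injOn]
  refine iInter₂_congr fun m _ => ?_
  rw [← image_iUnion₂, he.closure_image_eq]

theorem range_eq_Icc_zero_sSup {X : Type*} [TopologicalSpace X] [CompactSpace X]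
    [PreconnectedSpace X] {f : X → ℝ} (hf : Continuous f) (h0 : 0 ∈ range f)
    (hnonneg : ∀ x, 0 ≤ f x) : range f = Icc 0 (sSup (range f)) := by
  have hc := isCompact_range hf
  refine Subset.antisymm (range_subset_iff.2 fun x => ⟨hnonneg x, le_csSup hc.bddAbove ⟨x, rfl⟩⟩) ?_
  exact (isPreconnected_range hf).Icc_subset h0 (hc.sSup_mem ⟨0, h0⟩)

theorem proj_sub (x y : ℝ × ℝ) : proj (x - y) = proj x - proj y := rfl

theorem continuous_proj : Continuous proj :=
  (continuous_quotient_mk'.comp continuous_fst).prodMk (continuous_quotient_mk'.comp continuous_snd)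

theorem proj_surjective : Surjective proj := fun ⟨z₁, z₂⟩ => by
  obtain ⟨a, rfl⟩ := QuotientAddGroup.mk_surjective z₁
  obtain ⟨b, rfl⟩ := QuotientAddGroup.mk_surjective z₂
  exact ⟨(a, b), rfl⟩

theorem proj_eq_zero_iff {x : ℝ × ℝ} : proj x = 0 ↔ ∃ v : ℤ × ℤ, x = ((v.1 : ℝ), (v.2 : ℝ)) := by
  simp only [proj, Prod.mk_eq_zero, AddCircle.coe_eq_zero_iff, zsmul_eq_mul, mul_one]
  exact ⟨fun ⟨⟨m, hm⟩, n, hn⟩ => ⟨(m, n), Prod.ext hm.symm hn.symm⟩,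
    fun ⟨v, hv⟩ => ⟨⟨v.1, by rw [hv]⟩, v.2, by rw [hv]⟩⟩

theorem proj_eq_proj_iff {x y : ℝ × ℝ} :
    proj x = proj y ↔ ∃ v : ℤ × ℤ, y = x + ((v.1 : ℝ), (v.2 : ℝ)) := by
  rw [eq_comm, ← sub_eq_zero, ← proj_sub, proj_eq_zero_iff]
  simp_rw [sub_eq_iff_eq_add']

theorem proj_add_intCast (x : ℝ × ℝ) (v : ℤ × ℤ) : proj (x + ((v.1 : ℝ), (v.2 : ℝ))) = proj x :=
  (proj_eq_proj_iff.2 ⟨v, rfl⟩).symm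

theorem norm_proj_le (x : ℝ × ℝ) : ‖proj x‖ ≤ ‖x‖ :=
  max_le_max QuotientAddGroup.norm_mk_le_norm QuotientAddGroup.norm_mk_le_norm

theorem norm_le_half (z : T2) : ‖z‖ ≤ 1 / 2 := by
  rw [Prod.norm_def]
  simpa using max_le (AddCircle.norm_le_half_period (1 : ℝ) one_ne_zero (x := z.1))
    (AddCircle.norm_le_half_period (1 : ℝ) one_ne_zero (x := z.2))

namespace GoldenShear

def dir : ℝ × ℝ := (1, φ)

def speed (x : ℝ × ℝ) : ℝ := ‖proj x‖ / 8

def lift (x : ℝ × ℝ) : ℝ × ℝ := x + speed x • dir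

def torusMap (z : T2) : T2 := z + proj ((‖z‖ / 8) • dir)

theorem norm_dir : ‖dir‖ = φ := by
  rw [dir, Prod.norm_mk, norm_one, Real.norm_of_nonneg goldenRatio_pos.le,
    max_eq_right one_lt_goldenRatio.le]

theorem speed_nonneg (x : ℝ × ℝ) : 0 ≤ speed x := by unfold speed; positivity

theorem speed_eq_zero_iff {x : ℝ × ℝ} : speed x = 0 ↔ proj x = 0 := by
  simp [speed]

theorem speed_add_intCast (x : ℝ × ℝ) (v : ℤ × ℤ) :
    speed (x + ((v.1 : ℝ), (v.2 : ℝ))) = speed x := by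
  rw [speed, proj_add_intCast, speed]

theorem lipschitzWith_speed : LipschitzWith (1 / 8) speed := by
  refine LipschitzWith.of_dist_le_mul fun x y => ?_
  rw [Real.dist_eq, speed, speed, ← sub_div, abs_div, abs_of_pos (by norm_num : (0 : ℝ) < 8),
    dist_eq_norm]
  calc |‖proj x‖ - ‖proj y‖| / 8 ≤ ‖proj (x - y)‖ / 8 := by gcongr; exact abs_norm_sub_norm_le _ _
    _ ≤ ‖x - y‖ / 8 := by gcongr; exact norm_proj_le _
    _ = _ := by push_cast; ring

theorem lift_add_intCast (x : ℝ × ℝ) (v : ℤ × ℤ) :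
    lift (x + ((v.1 : ℝ), (v.2 : ℝ))) = lift x + ((v.1 : ℝ), (v.2 : ℝ)) := by
  rw [lift, lift, speed_add_intCast]; abel

theorem lift_eq_self_iff {x : ℝ × ℝ} : lift x = x ↔ proj x = 0 := by
  rw [lift, add_eq_left, smul_eq_zero, speed_eq_zero_iff]
  simp [dir]

theorem approximatesLinearOn_lift :
    ApproximatesLinearOn lift ((ContinuousLinearEquiv.refl ℝ (ℝ × ℝ) : (ℝ × ℝ) →L[ℝ] ℝ × ℝ))
      univ (1 / 4) := fun x _ y _ => by
  have h : lift x - lift y - (x - y) = (speed x - speed y) • dir := by simp only [lift]; module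
  change ‖lift x - lift y - (x - y)‖ ≤ _
  rw [h, norm_smul, norm_dir, Real.norm_eq_abs, ← Real.dist_eq, ← dist_eq_norm]
  calc dist (speed x) (speed y) * φ ≤ (1 / 8 * dist x y) * 2 := by
        gcongr
        · exact (lipschitzWith_speed.dist_le_mul x y).trans_eq (by norm_num)
        · exact goldenRatio_lt_two.le
    _ = _ := by push_cast; ring

def liftHomeomorph : (ℝ × ℝ) ≃ₜ (ℝ × ℝ) :=
  approximatesLinearOn_lift.toHomeomorph lift <| Or.inr <| by
    rw [ContinuousLinearEquiv.refl_symm, ContinuousLinearEquiv.coe_refl,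
      ContinuousLinearMap.nnnorm_id]
    norm_num

theorem coe_liftHomeomorph : ⇑liftHomeomorph = lift := rfl

theorem torusMap_proj (x : ℝ × ℝ) : torusMap (proj x) = proj (lift x) := rfl

theorem continuous_torusMap : Continuous torusMap :=
  continuous_id.add (continuous_proj.comp ((continuous_norm.div_const 8).smul continuous_const))

theorem torusMap_bijective : Bijective torusMap := by
  refine ⟨fun z w h => ?_, fun z => ?_⟩
  · obtain ⟨x, rfl⟩ := proj_surjective z
    obtain ⟨y, rfl⟩ := proj_surjective w
    rw [torusMap_proj, torusMap_proj, proj_eq_proj_iff] at h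
    obtain ⟨v, hv⟩ := h
    rw [← lift_add_intCast, ← coe_liftHomeomorph] at hv
    exact proj_eq_proj_iff.2 ⟨v, liftHomeomorph.injective hv⟩
  · obtain ⟨x, rfl⟩ := proj_surjective z
    obtain ⟨y, rfl⟩ := liftHomeomorph.surjective x
    exact ⟨proj y, torusMap_proj y⟩

def torusHomeomorph : T2 ≃ₜ T2 :=
  continuous_torusMap.homeoOfEquivCompactToT2 (f := Equiv.ofBijective _ torusMap_bijective)

theorem isLift : IsLift torusHomeomorph liftHomeomorph :=
  ⟨fun x => (torusMap_proj x).symm, lift_add_intCast⟩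

theorem torusMap_eq_self_iff {z : T2} : torusMap z = z ↔ z = 0 := by
  refine ⟨fun h => ?_, fun h => by simp [h, torusMap, proj]⟩
  have h₁ : (((‖z‖ / 8 : ℝ)) : UnitAddCircle) = 0 := by
    simpa [torusMap, proj, dir] using congrArg Prod.fst h
  have hsmall : |‖z‖ / 8| ≤ |(1 : ℝ)| / 2 := by
    rw [abs_of_nonneg (by positivity)]; linarith [norm_le_half z]
  rw [← norm_eq_zero, (AddCircle.norm_coe_eq_abs_iff (1 : ℝ) one_ne_zero).2 hsmall] at h₁
  simpa using h₁

def travel (n : ℕ) (z : T2) : ℝ := ∑ i ∈ Finset.range n, ‖torusMap^[i] z‖ / 8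

def maxTravel (n : ℕ) : ℝ := sSup (range (travel n))

theorem iterate_lift (n : ℕ) (x : ℝ × ℝ) : lift^[n] x = x + travel n (proj x) • dir := by
  induction n with
  | zero => simp [travel]
  | succ n ih =>
    have hproj : proj (lift^[n] x) = torusMap^[n] (proj x) :=
      (Semiconj.iterate_right (fun y => (torusMap_proj y).symm) n) x
    rw [iterate_succ_apply', lift, speed, hproj, ih]
    simp only [travel, Finset.sum_range_succ, add_smul, add_assoc]

theorem travel_nonneg (n : ℕ) (z : T2) : 0 ≤ travel n z :=
  Finset.sum_nonneg fun _ _ => by positivity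

theorem travel_le (n : ℕ) (z : T2) : travel n z ≤ n / 16 := by
  calc travel n z ≤ ∑ _i ∈ Finset.range n, (1 / 16 : ℝ) :=
        Finset.sum_le_sum fun i _ => by linarith [norm_le_half (torusMap^[i] z)]
    _ = n / 16 := by rw [Finset.sum_const, Finset.card_range, nsmul_eq_mul]; ring

theorem travel_zero_right (n : ℕ) : travel n 0 = 0 := by
  simp [travel, iterate_fixed (torusMap_eq_self_iff.2 rfl)]

theorem continuous_travel (n : ℕ) : Continuous (travel n) :=
  continuous_finsetSum _ fun i _ =>
    (continuous_norm.comp (continuous_torusMap.iterate i)).div_const 8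

theorem range_travel (n : ℕ) : range (travel n) = Icc 0 (maxTravel n) :=
  range_eq_Icc_zero_sSup (continuous_travel n) ⟨0, travel_zero_right n⟩ (travel_nonneg n)

theorem travel_le_maxTravel (n : ℕ) (z : T2) : travel n z ≤ maxTravel n :=
  (range_travel n ▸ mem_range_self (f := travel n) z).2

theorem maxTravel_nonneg (n : ℕ) : 0 ≤ maxTravel n :=
  (travel_nonneg n 0).trans (travel_le_maxTravel n 0)

theorem maxTravel_div_le (n : ℕ) : maxTravel n / n ≤ 1 / 16 := by
  obtain ⟨z, hz⟩ : maxTravel n ∈ range (travel n) := by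
    rw [range_travel]; exact ⟨maxTravel_nonneg n, le_rfl⟩
  rcases n.eq_zero_or_pos with rfl | hn
  · norm_num
  · rw [div_le_iff₀ (by exact_mod_cast hn), ← hz]; linarith [travel_le n z]

theorem displacements_eq {n : ℕ} (hn : 1 ≤ n) :
    {y : ℝ × ℝ | ∃ x : ℝ × ℝ, y = ((n : ℝ))⁻¹ • (lift^[n] x - x)} =
      (· • dir) '' Icc 0 (maxTravel n / n) := by
  have hn' : (0 : ℝ) < n := by exact_mod_cast hn
  ext y
  simp only [iterate_lift, add_sub_cancel_left, smul_smul, mem_image]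
  constructor
  · rintro ⟨x, rfl⟩
    refine ⟨_, ⟨mul_nonneg (by positivity) (travel_nonneg _ _), ?_⟩, rfl⟩
    rw [inv_mul_eq_div]; gcongr; exact travel_le_maxTravel n _
  · rintro ⟨s, ⟨hs0, hs⟩, rfl⟩
    obtain ⟨z, hz⟩ : s * n ∈ range (travel n) := by
      rw [range_travel]; exact ⟨by positivity, (le_div_iff₀ hn').1 hs⟩
    obtain ⟨x, rfl⟩ := proj_surjective z
    exact ⟨x, by rw [hz]; field_simp⟩

theorem rotSet_lift :
    rotSet lift = (· • dir) '' Icc 0 (limsup (fun n => maxTravel n / n) atTop) := by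
  have hdir : dir ≠ 0 := fun h => one_ne_zero (congrArg Prod.fst h)
  rw [← biInter_closure_biUnion_smul_Icc_eq hdir
    (fun n => div_nonneg (maxTravel_nonneg n) n.cast_nonneg) maxTravel_div_le, rotSet]
  refine iInter₂_congr fun m hm => congrArg closure (iUnion₂_congr fun n hn => ?_)
  exact displacements_eq (le_trans hm hn)

def line (t : ℝ) : ℝ × ℝ := ((0 : ℝ), (1 / 2 : ℝ)) + t • dir

def lineSpeed (t : ℝ) : ℝ := speed (line t)

def lineHeight (t : ℝ) : UnitAddCircle := ((φ * t + 1 / 2 : ℝ) : UnitAddCircle)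

theorem lineHeight_sub (s t : ℝ) :
    lineHeight s - lineHeight t = ((φ * (s - t) : ℝ) : UnitAddCircle) := by
  rw [lineHeight, lineHeight, ← AddCircle.coe_sub]; congr 1; ring

theorem lift_line (t : ℝ) : lift (line t) = line (t + lineSpeed t) := by
  simp only [lift, lineSpeed, line, add_smul, add_assoc]

theorem travel_line (n : ℕ) : travel n (proj (line 0)) = (fun t => t + lineSpeed t)^[n] 0 := by
  have h := (Semiconj.iterate_right (f := line) (fun t => (lift_line t).symm) n) 0
  rw [iterate_lift] at h
  simpa [line, dir] using (congrArg Prod.fst h).symm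

theorem lineSpeed_eq (t : ℝ) :
    lineSpeed t = max ‖(t : UnitAddCircle)‖ ‖lineHeight t‖ / 8 := by
  simp [lineSpeed, lineHeight, speed, line, dir, proj, Prod.norm_mk, add_comm, mul_comm]

theorem lineSpeed_pos (t : ℝ) : 0 < lineSpeed t := by
  refine (speed_nonneg _).lt_of_ne' fun h => ?_
  obtain ⟨v, hv⟩ := proj_eq_zero_iff.1 (speed_eq_zero_iff.1 h)
  simp only [line, dir, Prod.ext_iff, Prod.fst_add, Prod.smul_fst, Prod.snd_add, Prod.smul_snd,
    smul_eq_mul] at hv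
  obtain ⟨h₁, h₂⟩ := hv
  rw [show t = v.1 by linarith] at h₂
  rcases eq_or_ne v.1 0 with h0 | h0
  · have : 2 * v.2 = 1 := by
      rw [h0] at h₂; exact_mod_cast (by push_cast at h₂ ⊢; linarith : ((2 * v.2 : ℤ) : ℝ) = 1)
    omega
  · refine goldenRatio_irrational.ne_rat ((v.2 - 1 / 2) / v.1) ?_
    push_cast
    rw [eq_div_iff (by exact_mod_cast h0)]
    linarith

theorem lipschitzWith_lineSpeed : LipschitzWith (1 / 4) lineSpeed := by
  refine LipschitzWith.of_dist_le_mul fun s t => ?_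
  calc dist (lineSpeed s) (lineSpeed t) ≤ 1 / 8 * dist (line s) (line t) :=
        (lipschitzWith_speed.dist_le_mul _ _).trans_eq (by norm_num)
    _ = 1 / 8 * (φ * dist s t) := by
        rw [line, line, dist_add_left, dist_eq_norm, ← sub_smul, norm_smul, norm_dir,
          ← dist_eq_norm, mul_comm (dist s t)]
    _ ≤ _ := by
        have := dist_nonneg (x := s) (y := t)
        push_cast; nlinarith [goldenRatio_lt_two]

theorem inv_lineSpeed_le {k : ℤ} {t : ℝ} (ht : t ≠ k) (htk : |t - k| ≤ 1 / 2) :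
    (lineSpeed t)⁻¹ ≤ 24 / √‖lineHeight k‖ / √|t - k| := by
  set r := ‖lineHeight k‖
  have hk : ((k : ℝ) : UnitAddCircle) = 0 := (AddCircle.coe_eq_zero_iff 1).2 ⟨k, by simp⟩
  have hr : 0 < r := norm_pos_iff.2 (by simpa [lineSpeed_eq, hk] using lineSpeed_pos k)
  have hd : 0 < |t - k| := abs_pos.2 (sub_ne_zero.2 ht)
  have h₁ : ‖(t : UnitAddCircle)‖ = |t - k| := by
    rw [← (AddCircle.norm_coe_eq_abs_iff 1 one_ne_zero).2 (by simpa using htk), AddCircle.coe_sub,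
      hk, sub_zero]
  have h₂ : r - 2 * |t - k| ≤ ‖lineHeight t‖ := by
    have : r ≤ ‖lineHeight t‖ + |φ * (k - t)| := (norm_le_norm_add_norm_sub' _ _).trans <| by
      rw [lineHeight_sub]; gcongr; exact QuotientAddGroup.norm_mk_le_norm
    rw [abs_mul, abs_of_pos goldenRatio_pos, abs_sub_comm] at this
    nlinarith [goldenRatio_lt_two]
  have hlow : √(|t - k| * r) / 24 ≤ lineSpeed t := by
    rw [lineSpeed_eq, h₁]; linarith [sqrt_mul_le_three_mul_max hd.le h₂]
  calc (lineSpeed t)⁻¹ ≤ (√(|t - k| * r) / 24)⁻¹ := inv_anti₀ (by positivity) hlow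
    _ = 24 / √r / √|t - k| := by rw [Real.sqrt_mul hd.le]; field_simp

theorem continuous_inv_lineSpeed : Continuous fun t => (lineSpeed t)⁻¹ :=
  lipschitzWith_lineSpeed.continuous.inv₀ fun t => (lineSpeed_pos t).ne'

theorem integral_inv_lineSpeed_window_le (k : ℤ) :
    ∫ t in k - 1 / 2..k + 1 / 2, (lineSpeed t)⁻¹ ≤
      96 / √‖lineHeight k‖ := by
  refine (integral_le_of_le_div_sqrt_abs_sub (by norm_num) continuous_inv_lineSpeed
    fun t ht htk => inv_lineSpeed_le ht htk).trans ?_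
  have : √(1 / 2 : ℝ) ≤ 1 := Real.sqrt_le_one.mpr (by norm_num)
  calc 4 * (24 / √‖lineHeight k‖) * √(1 / 2)
      ≤ 4 * (24 / √‖lineHeight k‖) * 1 := by gcongr
    _ = _ := by ring

theorem integral_inv_lineSpeed_le_sum (N : ℕ) :
    ∫ t in (0 : ℝ)..N, (lineSpeed t)⁻¹ ≤
      ∑ k ∈ Finset.range (N + 1), 96 / √‖lineHeight k‖ := by
  calc ∫ t in (0 : ℝ)..N, (lineSpeed t)⁻¹ ≤ ∫ t in (0 - 1 / 2 : ℝ)..N + 1 / 2, (lineSpeed t)⁻¹ :=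
        intervalIntegral.integral_mono_interval (by norm_num) (by positivity) (by linarith)
          (Filter.Eventually.of_forall fun t => (inv_pos.2 (lineSpeed_pos t)).le)
          (continuous_inv_lineSpeed.intervalIntegrable _ _)
    _ = ∑ k ∈ Finset.range (N + 1), ∫ t in (k : ℝ) - 1 / 2..(k : ℝ) + 1 / 2, (lineSpeed t)⁻¹ := by
        have h := intervalIntegral.sum_integral_adjacent_intervals (n := N + 1) (μ := volume)
          (a := fun k : ℕ => (k : ℝ) - 1 / 2)
          fun k _ => continuous_inv_lineSpeed.intervalIntegrable _ _
        push_cast at h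
        convert h.symm using 3 with k
        · ring
        · ring
    _ ≤ _ := Finset.sum_le_sum fun k _ => by simpa using integral_inv_lineSpeed_window_le k

theorem one_div_le_norm_lineHeight (k : ℕ) :
    1 / (16 * (k + 1)) ≤ ‖lineHeight k‖ := by
  rcases k.eq_zero_or_pos with rfl | hk
  · rw [lineHeight, (AddCircle.norm_coe_eq_abs_iff 1 one_ne_zero).2 (by norm_num)]; norm_num
  -- Doubling kills the `1/2` and lands on a multiple of `φ`, where the Diophantine bound applies.
  have hdouble : ‖(((2 * k : ℕ) * φ : ℝ) : UnitAddCircle)‖ ≤ 2 * ‖lineHeight k‖ := by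
    have : (((2 * k : ℕ) * φ : ℝ) : UnitAddCircle) = 2 • lineHeight k := by
      rw [lineHeight, ← AddCircle.coe_nsmul, nsmul_eq_mul,
        show (2 : ℕ) * (φ * k + 1 / 2) = (2 * k : ℕ) * φ + 1 by push_cast; ring,
        AddCircle.coe_add, AddCircle.coe_period, add_zero]
    rw [this]; exact norm_nsmul_le
  have := one_div_four_mul_le_norm_mul_goldenRatio (q := 2 * k) (by omega)
  have hk' : (1 : ℝ) ≤ k := by exact_mod_cast hk
  calc 1 / (16 * ((k : ℝ) + 1)) ≤ 1 / (4 * ((2 * k : ℕ) : ℝ)) / 2 := by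
        push_cast; rw [div_div, div_le_div_iff_of_pos_left] <;> nlinarith
    _ ≤ _ := by linarith

theorem sum_inv_sqrt_norm_lineHeight_le (N : ℕ) :
    ∑ k ∈ Finset.range (N + 1), (√‖lineHeight k‖)⁻¹ ≤ 24 * (N + 1) := by
  have hN : (0 : ℝ) < N + 1 := by positivity
  have hsep : ∀ i j : ℕ, i < j → j ≤ N →
      1 / (4 * (N + 1)) ≤ ‖lineHeight j - lineHeight i‖ :=
    fun i j hij hj => by
      rw [lineHeight_sub, show φ * (j - i) = ((j - i : ℕ) : ℝ) * φ by
        rw [Nat.cast_sub hij.le]; ring]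
      refine le_trans ?_ (one_div_four_mul_le_norm_mul_goldenRatio (Nat.sub_pos_of_lt hij))
      gcongr
      · exact mul_pos (by norm_num) (by exact_mod_cast Nat.sub_pos_of_lt hij)
      · have : ((j - i : ℕ) : ℝ) ≤ N := by exact_mod_cast (Nat.sub_le j i).trans hj
        linarith
  refine (UnitAddCircle.sum_inv_sqrt_norm_le_of_separated (ε := 1 / (16 * (N + 1)))
    (δ := 1 / (4 * (N + 1))) (by positivity) (by positivity) (fun k hk => ?_)
    fun i hi j hj hij => ?_).trans ?_
  · refine le_trans ?_ (one_div_le_norm_lineHeight k)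
    have : (k : ℝ) ≤ N := by exact_mod_cast Nat.lt_succ_iff.1 (Finset.mem_range.1 hk)
    gcongr
  · have hi' := Nat.lt_succ_iff.1 (Finset.mem_range.1 hi)
    have hj' := Nat.lt_succ_iff.1 (Finset.mem_range.1 hj)
    rcases hij.lt_or_gt with h | h
    · rw [norm_sub_rev]; exact hsep i j h hj'
    · exact hsep j i h hi'
  · have hε : 1 / (4 * (N + 1)) ≤ √(1 / (16 * (N + 1)) : ℝ) := by
      rw [Real.le_sqrt (by positivity) (by positivity), div_pow,
        div_le_div_iff₀ (by positivity) (by positivity)]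
      nlinarith
    have : (√(1 / (16 * (N + 1)) : ℝ))⁻¹ ≤ 4 * (N + 1) := by
      rw [inv_le_comm₀ (by positivity) (by positivity), ← one_div]; exact hε
    rw [div_div_eq_mul_div, div_one]
    linarith

theorem integral_inv_lineSpeed_le (N : ℕ) :
    ∫ t in (0 : ℝ)..N, (lineSpeed t)⁻¹ ≤ 2304 * (N + 1) := by
  refine (integral_inv_lineSpeed_le_sum N).trans ?_
  simp_rw [div_eq_mul_inv (96 : ℝ), ← Finset.mul_sum]
  linarith [sum_inv_sqrt_norm_lineHeight_le N]

theorem limsup_maxTravel_div_pos : 0 < limsup (fun n => maxTravel n / n) atTop := by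
  have hgrowth := le_mul_iterate_add_two_of_integral_inv_le lipschitzWith_lineSpeed lineSpeed_pos
    integral_inv_lineSpeed_le
  have hev : ∀ᶠ n : ℕ in atTop, 1 / 5760 ≤ maxTravel n / n :=
    eventually_atTop.2 ⟨11520, fun n hn => by
      have hn' : (11520 : ℝ) ≤ n := by exact_mod_cast hn
      have hmax : (fun t => t + lineSpeed t)^[n] 0 ≤ maxTravel n :=
        travel_line n ▸ travel_le_maxTravel n _
      have := hgrowth n
      rw [le_div_iff₀ (by positivity)]
      push_cast at this
      linarith⟩
  exact lt_of_lt_of_le (by norm_num) <|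
    le_limsup_of_frequently_le hev.frequently (isBoundedUnder_of ⟨_, maxTravel_div_le⟩)

end GoldenShear

open GoldenShear in
/-- There is a torus homeomorphism homotopic to the identity with a unique fixed point
`p`, whose lift fixes exactly `π⁻¹(p)`, and whose rotation set is a nondegenerate segment
of irrational slope with `(0,0)` as an endpoint. -/
theorem exists_homeomorphism_with_irrational_slope_segment_rotation_set :
    ∃ (f : T2 ≃ₜ T2) (F : (ℝ × ℝ) ≃ₜ (ℝ × ℝ)) (p : T2) (v : ℝ × ℝ) (s : ℝ),
      IsLift ⇑f ⇑F ∧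
      v.1 ≠ 0 ∧ Irrational (v.2 / v.1) ∧
      0 < s ∧
      {z : T2 | f z = z} = {p} ∧
      {x : ℝ × ℝ | F x = x} = proj ⁻¹' {p} ∧
      rotSet ⇑F = {w : ℝ × ℝ | ∃ t : ℝ, 0 ≤ t ∧ t ≤ s ∧ w = t • v} := by
  refine ⟨torusHomeomorph, liftHomeomorph, 0, dir, _, isLift, one_ne_zero,
    by simpa [dir] using goldenRatio_irrational, limsup_maxTravel_div_pos,
    Set.ext fun z => torusMap_eq_self_iff, Set.ext fun x => lift_eq_self_iff, ?_⟩
  rw [coe_liftHomeomorph, rotSet_lift]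
  ext w
  simp [eq_comm, and_assoc]
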